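/- Let m, n ≥ 2 and let Γ be the one-vertex interface gluing of the complete graphs K_m and K_n at chosen vertices v_m ∈ K_m and v_n ∈ K_n, with (real symmetric) Laplacian matrix L. Then the Fiedler value of Γ is 1: that is, 1 is an eigenvalue of L, and every real eigenvalue λ of L with λ ≠ 0 satisfies λ ≥ 1. -/

import Mathlib

open scoped Classical

/-- `lam` is a (real) eigenvalue of the square matrix `M`. -/
def HasEig {ι : Type*} [Fintype ι] (M : Matrix ι ι ℝ) (lam : ℝ) : Prop :=
  ∃ v : ι → ℝ, v ≠ 0 ∧ M.mulVec v = lam • v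

/-- The one-vertex interface gluing of `G₁` and `G₂` at `(v₁, v₂)`:
the graph on `V₁ ⊕ {x : V₂ // x ≠ v₂}` identifying `v₁` with `v₂`. -/
def interfaceGlueOne {V₁ V₂ : Type*} (G₁ : SimpleGraph V₁) (G₂ : SimpleGraph V₂)
    (v₁ : V₁) (v₂ : V₂) : SimpleGraph (V₁ ⊕ {x : V₂ // x ≠ v₂}) where
  Adj x y :=
    match x, y with
    | Sum.inl u, Sum.inl v => G₁.Adj u v
    | Sum.inr u, Sum.inr v => G₂.Adj u v
    | Sum.inl u, Sum.inr v => u = v₁ ∧ G₂.Adj v₂ v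
    | Sum.inr u, Sum.inl v => v = v₁ ∧ G₂.Adj v₂ u
  symm := ⟨by
    rintro (u | u) (v | v) h
    · exact G₁.adj_symm h
    · exact h
    · exact h
    · exact G₂.adj_symm h⟩
  loopless := ⟨by
    rintro (u | u) h
    · exact G₁.loopless.irrefl u h
    · exact G₂.loopless.irrefl u h⟩

/-
Write a vector on the glued graph as a pair `(f, g)` of vectors on the two cliques that agree at
the glued vertex. The Laplacian then acts as the sum of the two clique Laplacians, and on `K_k`
that Laplacian is `f ↦ k • f - ∑ f`. The vector which is `0` at the glued vertex, `n - 1` on the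
rest of `K_m` and `-(m - 1)` on the rest of `K_n` is an eigenvector for `1`. Conversely, let `μ`
be a nonzero eigenvalue with `μ < 1`. The eigenvector sums to zero, so the equation at the glued
vertex reads `(m + n - 1 - μ) c = 0` for its value `c` there, whence `c = 0`. On each clique,
`(k - μ) f i = ∑ f` off the glued vertex; summing gives `(1 - μ) ∑ f = 0`, so the eigenvector
vanishes.
-/

open Finset Matrix

namespace SimpleGraph

variable {V R : Type*} [Fintype V] [DecidableEq V]

lemma lapMatrix_mulVec_apply_eq_sum_ite [NonAssocRing R] (G : SimpleGraph V) [DecidableRel G.Adj]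
    (x : V → R) (i : V) :
    (G.lapMatrix R *ᵥ x) i = ∑ j, if G.Adj i j then x i - x j else 0 := by
  rw [lapMatrix_mulVec_apply, degree, ← nsmul_eq_mul, ← sum_const, ← sum_sub_distrib,
    neighborFinset_eq_filter, sum_filter]

lemma sum_lapMatrix_mulVec [CommRing R] (G : SimpleGraph V) [DecidableRel G.Adj] (x : V → R) :
    ∑ i, (G.lapMatrix R *ᵥ x) i = 0 :=
  calc ∑ i, (G.lapMatrix R *ᵥ x) i = (fun _ ↦ 1) ⬝ᵥ (G.lapMatrix R *ᵥ x) := by simp [dotProduct]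
    _ = (G.lapMatrix R *ᵥ fun _ ↦ 1) ⬝ᵥ x := by
      rw [dotProduct_mulVec, ← mulVec_transpose, (isSymm_lapMatrix (G := G) (R := R)).eq]
    _ = 0 := by rw [lapMatrix_mulVec_const_eq_zero, zero_dotProduct]

lemma sum_eq_zero_of_lapMatrix_mulVec_eq_smul [CommRing R] [NoZeroDivisors R]
    (G : SimpleGraph V) [DecidableRel G.Adj] {x : V → R} {μ : R} (hμ : μ ≠ 0)
    (hx : G.lapMatrix R *ᵥ x = μ • x) : ∑ i, x i = 0 := by
  have := G.sum_lapMatrix_mulVec x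
  rw [hx] at this
  simpa [← mul_sum, hμ] using this

lemma lapMatrix_top_mulVec_apply [NonAssocRing R] (x : V → R) (i : V) :
    ((⊤ : SimpleGraph V).lapMatrix R *ᵥ x) i = Fintype.card V * x i - ∑ j, x j := by
  have hcard : 1 ≤ Fintype.card V := Fintype.card_pos_iff.2 ⟨i⟩
  rw [lapMatrix_mulVec_apply, ← card_neighborFinset_eq_degree, neighborFinset_top, card_compl,
    card_singleton, Nat.cast_sub hcard, ← sum_compl_add_sum {i}, sum_singleton, Nat.cast_one,
    sub_one_mul]
  abel

lemma eq_zero_of_lapMatrix_top_mulVec_eq_mul_of_lt_one {f : V → ℝ} {i₀ : V} {μ : ℝ} (hμ : μ < 1)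
    (hf₀ : f i₀ = 0)
    (hf : ∀ i ≠ i₀, ((⊤ : SimpleGraph V).lapMatrix ℝ *ᵥ f) i = μ * f i) : f = 0 := by
  set s := ∑ i, f i
  have hcard : (1 : ℝ) ≤ Fintype.card V := by exact_mod_cast Fintype.card_pos_iff.2 ⟨i₀⟩
  -- At `i₀` this reads `0 = s - s`, so summing over all `i` gives `(card - μ) s = (card - 1) s`.
  have hmul : ∀ i, (Fintype.card V - μ) * f i = s - if i = i₀ then s else 0 := by
    intro i
    by_cases hi : i = i₀
    · simp [hi, hf₀]
    · have := hf i hi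
      rw [lapMatrix_top_mulVec_apply] at this
      rw [if_neg hi]
      linarith
  have hs : s = 0 := by
    have hsum : (Fintype.card V - μ) * s = Fintype.card V * s - s := by
      simp [s, mul_sum, hmul, sum_sub_distrib]
    have : (1 - μ) * s = 0 := by linear_combination hsum
    exact (mul_eq_zero.1 this).resolve_left (by linarith)
  ext i
  have := hmul i
  simp only [hs, ite_self, sub_zero, mul_eq_zero] at this
  exact this.resolve_left (by linarith)

end SimpleGraph

namespace interfaceGlueOne

variable {V₁ V₂ : Type*} {G₁ : SimpleGraph V₁} {G₂ : SimpleGraph V₂} {v₁ : V₁} {v₂ : V₂}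

@[simp] lemma adj_inl_inl {a a' : V₁} :
    (interfaceGlueOne G₁ G₂ v₁ v₂).Adj (.inl a) (.inl a') ↔ G₁.Adj a a' := .rfl

@[simp] lemma adj_inr_inr {b b' : {x // x ≠ v₂}} :
    (interfaceGlueOne G₁ G₂ v₁ v₂).Adj (.inr b) (.inr b') ↔ G₂.Adj b b' := .rfl

@[simp] lemma adj_inl_inr {a : V₁} {b : {x // x ≠ v₂}} :
    (interfaceGlueOne G₁ G₂ v₁ v₂).Adj (.inl a) (.inr b) ↔ a = v₁ ∧ G₂.Adj v₂ b := .rfl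

@[simp] lemma adj_inr_inl {a : V₁} {b : {x // x ≠ v₂}} :
    (interfaceGlueOne G₁ G₂ v₁ v₂).Adj (.inr b) (.inl a) ↔ a = v₁ ∧ G₂.Adj v₂ b := .rfl

lemma exists_sumElim_eq [DecidableEq V₂] {α : Type*} (x : V₁ ⊕ {x // x ≠ v₂} → α) :
    ∃ f : V₁ → α, ∃ g : V₂ → α, f v₁ = g v₂ ∧ Sum.elim f (g ∘ Subtype.val) = x := by
  refine ⟨x ∘ .inl, fun b ↦ if hb : b = v₂ then x (.inl v₁) else x (.inr ⟨b, hb⟩), by simp, ?_⟩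
  funext x
  rcases x with a | ⟨b, hb⟩
  · rfl
  · simp [hb]

variable [Fintype V₁] [DecidableEq V₁] [Fintype V₂] [DecidableEq V₂]
  [DecidableRel G₁.Adj] [DecidableRel G₂.Adj] [DecidableRel (interfaceGlueOne G₁ G₂ v₁ v₂).Adj]

lemma lapMatrix_mulVec_sumElim {R : Type*} [NonAssocRing R] (f : V₁ → R) (g : V₂ → R)
    (hfg : f v₁ = g v₂) :
    (interfaceGlueOne G₁ G₂ v₁ v₂).lapMatrix R *ᵥ Sum.elim f (g ∘ Subtype.val) =
      Sum.elim (G₁.lapMatrix R *ᵥ f + Pi.single v₁ ((G₂.lapMatrix R *ᵥ g) v₂))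
        ((G₂.lapMatrix R *ᵥ g) ∘ Subtype.val) := by
  ext (a | b) <;>
    simp only [SimpleGraph.lapMatrix_mulVec_apply_eq_sum_ite, Fintype.sum_sum_type, Sum.elim_inl,
      Sum.elim_inr, Pi.add_apply, Function.comp_apply, Fintype.sum_eq_add_sum_subtype_ne _ v₂]
  · by_cases ha : a = v₁
    · subst ha
      simp [hfg]
    · simp [ha]
  · simp [ite_and, hfg, G₂.adj_comm]

lemma lapMatrix_mulVec_sumElim_eq_smul_iff {R : Type*} [NonAssocRing R] {f : V₁ → R}
    {g : V₂ → R} (hfg : f v₁ = g v₂) (μ : R) :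
    (interfaceGlueOne G₁ G₂ v₁ v₂).lapMatrix R *ᵥ Sum.elim f (g ∘ Subtype.val) =
        μ • Sum.elim f (g ∘ Subtype.val) ↔
      (∀ a ≠ v₁, (G₁.lapMatrix R *ᵥ f) a = μ * f a) ∧
      (G₁.lapMatrix R *ᵥ f) v₁ + (G₂.lapMatrix R *ᵥ g) v₂ = μ * f v₁ ∧
      ∀ b ≠ v₂, (G₂.lapMatrix R *ᵥ g) b = μ * g b := by
  simp only [lapMatrix_mulVec_sumElim f g hfg, funext_iff, Sum.forall, Subtype.forall,
    Sum.elim_inl, Sum.elim_inr, Pi.add_apply, Pi.smul_apply, Function.comp_apply, smul_eq_mul]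
  constructor
  · rintro ⟨h₁, h₂⟩
    exact ⟨fun a ha ↦ by simpa [ha] using h₁ a, by simpa using h₁ v₁, h₂⟩
  · rintro ⟨h₁, h₀, h₂⟩
    refine ⟨fun a ↦ ?_, h₂⟩
    by_cases ha : a = v₁
    · subst ha
      simpa using h₀
    · simpa [ha] using h₁ a ha

end interfaceGlueOne

section complete

variable {V₁ V₂ : Type*} [Fintype V₁] [DecidableEq V₁] [Fintype V₂] [DecidableEq V₂]
  (v₁ : V₁) (v₂ : V₂)
  [DecidableRel (interfaceGlueOne (⊤ : SimpleGraph V₁) (⊤ : SimpleGraph V₂) v₁ v₂).Adj]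

theorem hasEig_one_lapMatrix_interfaceGlueOne_top (h₁ : 1 < Fintype.card V₁)
    (h₂ : 1 < Fintype.card V₂) :
    HasEig ((interfaceGlueOne (⊤ : SimpleGraph V₁) (⊤ : SimpleGraph V₂) v₁ v₂).lapMatrix ℝ) 1 := by
  set m : ℝ := (Fintype.card V₁ : ℝ)
  set n : ℝ := (Fintype.card V₂ : ℝ)
  let f : V₁ → ℝ := fun a ↦ if a = v₁ then 0 else n - 1
  let g : V₂ → ℝ := fun b ↦ if b = v₂ then 0 else -(m - 1)
  have hfg : f v₁ = g v₂ := by simp [f, g]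
  have hf : ∑ a, f a = (m - 1) * (n - 1) := by
    simp [f, sum_ite, filter_ne', Nat.cast_sub h₁.le]
    ring
  have hg : ∑ b, g b = -(n - 1) * (m - 1) := by
    simp [g, sum_ite, filter_ne', Nat.cast_sub h₂.le]
    ring
  obtain ⟨b, hb⟩ := Fintype.exists_ne_of_one_lt_card h₂ v₂
  refine ⟨Sum.elim f (g ∘ Subtype.val), fun h ↦ ?_, ?_⟩
  · have := congrFun h (.inr ⟨b, hb⟩)
    have hm : (1 : ℝ) < m := Nat.one_lt_cast.2 h₁
    simp [g, hb] at this
    linarith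
  · rw [interfaceGlueOne.lapMatrix_mulVec_sumElim_eq_smul_iff hfg]
    simp only [SimpleGraph.lapMatrix_top_mulVec_apply, hf, hg]
    refine ⟨fun a ha ↦ ?_, ?_, fun b hb ↦ ?_⟩
    · simp [f, ha]; ring
    · simp [f, g]; ring
    · simp [g, hb]; ring

theorem one_le_of_hasEig_lapMatrix_interfaceGlueOne_top {μ : ℝ} (hμ : μ ≠ 0)
    (h : HasEig
      ((interfaceGlueOne (⊤ : SimpleGraph V₁) (⊤ : SimpleGraph V₂) v₁ v₂).lapMatrix ℝ) μ) :
    1 ≤ μ := by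
  obtain ⟨x, hx0, hx⟩ := h
  by_contra! hμ₁
  obtain ⟨f, g, hfg, rfl⟩ := interfaceGlueOne.exists_sumElim_eq (v₁ := v₁) x
  have hsum := SimpleGraph.sum_eq_zero_of_lapMatrix_mulVec_eq_smul _ hμ hx
  rw [Fintype.sum_sum_type] at hsum
  obtain ⟨hf, h₀, hg⟩ := (interfaceGlueOne.lapMatrix_mulVec_sumElim_eq_smul_iff hfg μ).1 hx
  rw [SimpleGraph.lapMatrix_top_mulVec_apply, SimpleGraph.lapMatrix_top_mulVec_apply,
    Fintype.sum_eq_add_sum_subtype_ne g v₂] at h₀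
  have hc : f v₁ = 0 := by
    have h₁ : (1 : ℝ) ≤ Fintype.card V₁ := by exact_mod_cast Fintype.card_pos_iff.2 ⟨v₁⟩
    have h₂ : (1 : ℝ) ≤ Fintype.card V₂ := by exact_mod_cast Fintype.card_pos_iff.2 ⟨v₂⟩
    have hcoeff : (Fintype.card V₁ + Fintype.card V₂ - 1 - μ) * f v₁ = 0 := by
      simp only [Sum.elim_inl, Sum.elim_inr, Function.comp_apply] at hsum
      linear_combination h₀ + hsum + (Fintype.card V₂ - 1 : ℝ) * hfg
    exact (mul_eq_zero.1 hcoeff).resolve_left (by linarith)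
  have hf₀ := SimpleGraph.eq_zero_of_lapMatrix_top_mulVec_eq_mul_of_lt_one hμ₁ hc hf
  have hg₀ := SimpleGraph.eq_zero_of_lapMatrix_top_mulVec_eq_mul_of_lt_one hμ₁ (hfg ▸ hc) hg
  exact hx0 (by simp [hf₀, hg₀])

end complete

theorem fiedler_interfaceGlueOne_complete (m n : ℕ) (hm : 2 ≤ m) (hn : 2 ≤ n)
    (vm : Fin m) (vn : Fin n) :
    HasEig ((interfaceGlueOne (⊤ : SimpleGraph (Fin m)) (⊤ : SimpleGraph (Fin n))
        vm vn).lapMatrix ℝ) 1 ∧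
    (∀ lam : ℝ, lam ≠ 0 →
      HasEig ((interfaceGlueOne (⊤ : SimpleGraph (Fin m)) (⊤ : SimpleGraph (Fin n))
        vm vn).lapMatrix ℝ) lam → 1 ≤ lam) :=
  ⟨hasEig_one_lapMatrix_interfaceGlueOne_top vm vn (by simpa) (by simpa),
    fun _ hlam ↦ one_le_of_hasEig_lapMatrix_interfaceGlueOne_top vm vn hlam⟩
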